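/- Every empty 7-pair whose two spanning faces f_e, f_e' neighbour 7 pairwise different faces has exactly 7 vertices and at least 14 edges. -/

import Mathlib

/-- A combinatorial map (connected graph cellularly embedded in an orientable surface),
given by a set of darts `D`, the edge involution `σ` and the rotation `ρ`. -/
structure CombMap where
  D : Type
  fin : Finite D
  σ : Equiv.Perm D
  ρ : Equiv.Perm D
  σ_invol : ∀ d, σ (σ d) = d
  σ_fixfree : ∀ d, σ d ≠ d
  conn : ∀ d d' : D, ∃ g ∈ Subgroup.closure ({σ, ρ} : Set (Equiv.Perm D)), g d = d'

attribute [instance] CombMap.fin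

namespace CombMap

variable (M : CombMap)

/-- The face permutation. -/
def φ : Equiv.Perm M.D := M.ρ * M.σ

def vSetoid : Setoid M.D :=
  ⟨M.ρ.SameCycle, ⟨fun _ => Equiv.Perm.SameCycle.refl _ _,
    Equiv.Perm.SameCycle.symm, Equiv.Perm.SameCycle.trans⟩⟩

def eSetoid : Setoid M.D :=
  ⟨M.σ.SameCycle, ⟨fun _ => Equiv.Perm.SameCycle.refl _ _,
    Equiv.Perm.SameCycle.symm, Equiv.Perm.SameCycle.trans⟩⟩

def fSetoid : Setoid M.D :=
  ⟨M.φ.SameCycle, ⟨fun _ => Equiv.Perm.SameCycle.refl _ _,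
    Equiv.Perm.SameCycle.symm, Equiv.Perm.SameCycle.trans⟩⟩

/-- Vertices are orbits of `ρ`. -/
def Vertex := Quotient M.vSetoid
/-- Edges are orbits of `σ`. -/
def Edge := Quotient M.eSetoid
/-- Faces are orbits of `φ`. -/
def Face := Quotient M.fSetoid

instance : Finite M.Vertex := Quotient.finite _
instance : Finite M.Edge := Quotient.finite _
instance : Finite M.Face := Quotient.finite _

def vtx (d : M.D) : M.Vertex := Quotient.mk M.vSetoid d
def edg (d : M.D) : M.Edge := Quotient.mk M.eSetoid d
def fce (d : M.D) : M.Face := Quotient.mk M.fSetoid d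

noncomputable def nV : ℕ := Nat.card M.Vertex
noncomputable def nE : ℕ := Nat.card M.Edge
noncomputable def nF : ℕ := Nat.card M.Face

/-- The size of a face: the length of its facial walk, i.e. the number of darts in it. -/
noncomputable def faceSize (f : M.Face) : ℕ := Nat.card {d : M.D // M.fce d = f}

/-- The degree of a vertex: the number of darts emanating from it. -/
noncomputable def degree (v : M.Vertex) : ℕ := Nat.card {d : M.D // M.vtx d = v}

/-- The face excess `Σ_f (d(f) - 3)`. -/
noncomputable def faceExcess : ℤ := ∑ᶠ f : M.Face, ((M.faceSize f : ℤ) - 3)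

/-- The underlying graph of the map is simple: no loops, no multiple edges. -/
def Simple : Prop :=
  (∀ d, M.vtx d ≠ M.vtx (M.σ d)) ∧
  ∀ d d', M.vtx d = M.vtx d' → M.vtx (M.σ d) = M.vtx (M.σ d') → M.edg d = M.edg d'

/-- The dual has no loops. -/
def DualLoopFree : Prop := ∀ d, M.fce d ≠ M.fce (M.σ d)

/-- The dual is simple: no loops and no multiple edges. -/
def DualSimple : Prop :=
  M.DualLoopFree ∧
  ∀ d d', M.fce d = M.fce d' → M.fce (M.σ d) = M.fce (M.σ d') → M.edg d = M.edg d'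

/-- The underlying simple graph on the vertices of the map. -/
def graph : SimpleGraph M.Vertex :=
  SimpleGraph.fromRel (fun a b => ∃ d, M.vtx d = a ∧ M.vtx (M.σ d) = b)

/-- The underlying simple graph of the dual map, on the faces of the map. -/
def dualGraph : SimpleGraph M.Face :=
  SimpleGraph.fromRel (fun a b => ∃ d, M.fce d = a ∧ M.fce (M.σ d) = b)

/-- Vertex `v` lies on the face `f`. -/
def VertexOnFace (v : M.Vertex) (f : M.Face) : Prop := ∃ d, M.fce d = f ∧ M.vtx d = v

/-- Faces `f` and `f'` share an edge. -/
def FaceAdj (f f' : M.Face) : Prop := ∃ d, M.fce d = f ∧ M.fce (M.σ d) = f'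

end CombMap

/-- `k`-connectivity of a graph: more than `k` vertices, and removing fewer than `k`
vertices never disconnects it. -/
def KConn {α : Type} (H : SimpleGraph α) (k : ℕ) : Prop :=
  k < Nat.card α ∧ ∀ S : Set α, S.ncard < k → (H.induce Sᶜ).Connected

namespace CombMap

variable (M : CombMap)

/-- An empty `k`-circuit: a map on at most `k` vertices with a spanning face `f_e` of
size `k`, whose underlying graph is simple, whose dual has no loops, and all of whose
dual multi-edges are incident with `f_e`. -/
def IsEmptyCircuit (k : ℕ) (fe : M.Face) : Prop :=
  M.nV ≤ k ∧ M.faceSize fe = k ∧ (∀ v : M.Vertex, M.VertexOnFace v fe) ∧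
  M.Simple ∧ M.DualLoopFree ∧
  ∀ d d', M.fce d = M.fce d' → M.fce (M.σ d) = M.fce (M.σ d') → M.edg d ≠ M.edg d' →
    (M.fce d = fe ∨ M.fce (M.σ d) = fe)

/-- An empty `k`-pair: a map on at most `k` vertices with two spanning faces
`f_e, f_e'` with `d(f_e)+d(f_e') = k` not sharing an edge, whose underlying graph is
simple, whose dual has no loops, and all of whose dual multi-edges are incident with
`f_e` or `f_e'`. -/
def IsEmptyPair (k : ℕ) (fe fe' : M.Face) : Prop :=
  M.nV ≤ k ∧ fe ≠ fe' ∧ M.faceSize fe + M.faceSize fe' = k ∧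
  (∀ v : M.Vertex, M.VertexOnFace v fe ∨ M.VertexOnFace v fe') ∧
  ¬ M.FaceAdj fe fe' ∧
  M.Simple ∧ M.DualLoopFree ∧
  ∀ d d', M.fce d = M.fce d' → M.fce (M.σ d) = M.fce (M.σ d') → M.edg d ≠ M.edg d' →
    (M.fce d = fe ∨ M.fce d = fe' ∨ M.fce (M.σ d) = fe ∨ M.fce (M.σ d) = fe')

end CombMap

/-!
Let `P` be the 7 darts on `f_e` and `f_e'`. Sending a dart of `P` to the face across its edge
maps `P` onto the 7 neighbouring faces, hence injectively. Around a vertex, a dart `x ∈ P` is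
followed by two darts outside `P`: `ρ x` lies on the face across `x`, which is neither `f_e` nor
`f_e'` as these are non-adjacent and the dual is loopless; and if `ρ (ρ x) ∈ P`, then
`σ (ρ x) ∈ P` has the same face across as `x`, so `σ (ρ x) = x` and `x` is a loop. Thus either
the darts of `P` lie at 7 distinct vertices, or some vertex has degree at least 6, and a simple
graph then has at least 7 vertices. Counting darts, `2|E| ≥ 7 + 3 · 7`, as the 7 neighbouring
faces have size at least 3.
-/

namespace CombMap

variable {M : CombMap}

lemma vtx_rho (d : M.D) : M.vtx (M.ρ d) = M.vtx d :=
  Quotient.sound (Equiv.Perm.sameCycle_apply_left.2 (.refl _ _))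

lemma vtx_rho_pow (n : ℕ) (d : M.D) : M.vtx ((M.ρ ^ n) d) = M.vtx d :=
  Quotient.sound (Equiv.Perm.sameCycle_pow_left.2 (.refl _ _))

lemma edg_sigma (d : M.D) : M.edg (M.σ d) = M.edg d :=
  Quotient.sound (Equiv.Perm.sameCycle_apply_left.2 (.refl _ _))

lemma fce_phi (d : M.D) : M.fce (M.φ d) = M.fce d :=
  Quotient.sound (Equiv.Perm.sameCycle_apply_left.2 (.refl _ _))

lemma fce_rho (d : M.D) : M.fce (M.ρ d) = M.fce (M.σ d) := by
  simpa only [φ, Equiv.Perm.mul_apply, M.σ_invol] using fce_phi (M.σ d)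

lemma eq_or_eq_sigma_of_edg_eq {d d' : M.D} (h : M.edg d = M.edg d') :
    d' = d ∨ d' = M.σ d := by
  have hord : orderOf M.σ ≤ 2 :=
    orderOf_le_of_pow_eq_one two_pos (Equiv.ext fun x => by simp [sq, M.σ_invol])
  obtain ⟨i, hi, rfl⟩ := (Quotient.exact h : M.σ.SameCycle d d').exists_pow_eq'
  have hi2 : i < 2 := hi.trans_le hord
  interval_cases i <;> simp

lemma card_D_eq_two_mul_nE : Nat.card M.D = 2 * M.nE := by
  have hfiber : ∀ e : M.Edge, Nat.card {d // M.edg d = e} = 2 := by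
    rintro ⟨d⟩
    have hset : {x | M.edg x = M.edg d} = {d, M.σ d} := by
      ext x
      refine ⟨fun hx => eq_or_eq_sigma_of_edg_eq hx.symm, ?_⟩
      rintro (rfl | rfl)
      exacts [rfl, edg_sigma d]
    rw [← Set.ncard_pair (M.σ_fixfree d).symm, ← hset, ← Nat.card_coe_set_eq]
    rfl
  let := Fintype.ofFinite M.Edge
  rw [← Nat.card_congr (Equiv.sigmaFiberEquiv M.edg), Nat.card_sigma]
  simp [hfiber, nE, mul_comm]

lemma FaceAdj.symm {f g : M.Face} (h : M.FaceAdj f g) : M.FaceAdj g f := by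
  obtain ⟨d, rfl, rfl⟩ := h
  exact ⟨M.σ d, rfl, by rw [M.σ_invol]⟩

lemma DualLoopFree.not_faceAdj_self (hd : M.DualLoopFree) (f : M.Face) : ¬ M.FaceAdj f f :=
  fun ⟨d, h₁, h₂⟩ => hd d (h₁.trans h₂.symm)

lemma Simple.eq_of_vtx_eq (hs : M.Simple) {x y : M.D} (h₁ : M.vtx x = M.vtx y)
    (h₂ : M.vtx (M.σ x) = M.vtx (M.σ y)) : x = y := by
  rcases eq_or_eq_sigma_of_edg_eq (hs.2 x y h₁ h₂) with h | h
  · exact h.symm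
  · exact absurd (h ▸ h₁) (hs.1 x)

lemma degree_eq_ncard (v : M.Vertex) : M.degree v = (M.vtx ⁻¹' {v}).ncard :=
  (Nat.card_coe_set_eq _).symm

lemma faceSize_eq_ncard (f : M.Face) : M.faceSize f = (M.fce ⁻¹' {f}).ncard :=
  (Nat.card_coe_set_eq _).symm

lemma Simple.degree_lt_nV (hs : M.Simple) (v : M.Vertex) : M.degree v < M.nV := by
  have hmaps : ∀ d ∈ M.vtx ⁻¹' {v}, M.vtx (M.σ d) ∈ Set.univ \ {v} :=
    fun d hd => ⟨trivial, fun h => hs.1 d (hd.trans h.symm)⟩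
  have hinj : Set.InjOn (fun d => M.vtx (M.σ d)) (M.vtx ⁻¹' {v}) :=
    fun x hx y hy h => hs.eq_of_vtx_eq (hx.trans hy.symm) h
  calc M.degree v ≤ (Set.univ \ {v}).ncard := by
        rw [degree_eq_ncard]; exact Set.ncard_le_ncard_of_injOn _ hmaps hinj
    _ < M.nV := by
        rw [nV, ← Set.ncard_univ]; exact Set.ncard_sdiff_singleton_lt_of_mem (Set.mem_univ v)

lemma Simple.phi_apply_ne (hs : M.Simple) (d : M.D) : M.φ d ≠ d := fun h =>
  hs.1 d (by rw [← vtx_rho (M.σ d)]; exact congrArg M.vtx h.symm)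

lemma Simple.phi_phi_apply_ne (hs : M.Simple) (hd : M.DualLoopFree) (d : M.D) :
    M.φ (M.φ d) ≠ d := by
  intro h
  have hσ : M.σ (M.φ d) = d := by
    refine hs.eq_of_vtx_eq ?_ ?_
    · rw [← vtx_rho (M.σ (M.φ d))]; exact congrArg M.vtx h
    · rw [M.σ_invol]; exact vtx_rho (M.σ d)
  have hφ : M.φ d = M.σ d := by simpa only [M.σ_invol] using congrArg M.σ hσ
  exact hd d (by rw [← hφ, fce_phi])

lemma three_le_faceSize (hs : M.Simple) (hd : M.DualLoopFree) (f : M.Face) :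
    3 ≤ M.faceSize f := by
  obtain ⟨d, rfl⟩ : ∃ d, M.fce d = f := Quotient.exists_rep f
  have hsub : {d, M.φ d, M.φ (M.φ d)} ⊆ M.fce ⁻¹' {M.fce d} := by
    rintro _ (rfl | rfl | rfl)
    · rfl
    · exact fce_phi d
    · exact (fce_phi _).trans (fce_phi _)
  calc 3 = ({d, M.φ d, M.φ (M.φ d)} : Set M.D).ncard :=
        (Set.ncard_eq_three.2 ⟨_, _, _, (hs.phi_apply_ne d).symm,
          (hs.phi_phi_apply_ne hd d).symm, (hs.phi_apply_ne _).symm, rfl⟩).symm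
    _ ≤ M.faceSize (M.fce d) := (faceSize_eq_ncard _).symm ▸ Set.ncard_le_ncard hsub

section FaceSet

def faceNbrs (M : CombMap) (F : Set M.Face) : Set M.Face := {f | ∃ g ∈ F, M.FaceAdj g f}

variable {F : Set M.Face}

lemma faceNbrs_eq_image : M.faceNbrs F = (fun d => M.fce (M.σ d)) '' (M.fce ⁻¹' F) := by
  ext f
  simp only [faceNbrs, FaceAdj, Set.mem_image, Set.mem_preimage]
  constructor
  · rintro ⟨_, hg, d, rfl, hd⟩
    exact ⟨d, hg, hd⟩
  · rintro ⟨d, hd, rfl⟩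
    exact ⟨_, hd, d, rfl, rfl⟩

lemma faceNbrs_pair (f g : M.Face) :
    M.faceNbrs {f, g} = {h | M.FaceAdj f h ∨ M.FaceAdj g h} := by
  ext
  simp [faceNbrs]

lemma injOn_fce_sigma_of_ncard_faceNbrs_eq
    (h : (M.faceNbrs F).ncard = (M.fce ⁻¹' F).ncard) :
    Set.InjOn (fun d => M.fce (M.σ d)) (M.fce ⁻¹' F) :=
  Set.injOn_of_ncard_image_eq (faceNbrs_eq_image ▸ h)

lemma ncard_preimage_pair {f g : M.Face} (h : f ≠ g) :
    (M.fce ⁻¹' {f, g}).ncard = M.faceSize f + M.faceSize g := by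
  rw [Set.insert_eq, Set.preimage_union, Set.ncard_union_eq, faceSize_eq_ncard,
    faceSize_eq_ncard]
  exact (Set.disjoint_singleton.2 h).preimage _

lemma three_mul_ncard_le_ncard_preimage (hs : M.Simple) (hd : M.DualLoopFree)
    (N : Set M.Face) : 3 * N.ncard ≤ (M.fce ⁻¹' N).ncard := by
  let := Fintype.ofFinite N
  have hcard : (M.fce ⁻¹' N).ncard = ∑ f : N, M.faceSize f := by
    rw [← Nat.card_coe_set_eq]
    exact (Nat.card_congr
      (Equiv.sigmaSubtypeFiberEquivSubtype M.fce (q := (· ∈ N)) fun _ => Iff.rfl).symm).trans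
        Nat.card_sigma
  calc 3 * N.ncard = ∑ _f : N, 3 := by
        rw [Finset.sum_const, smul_eq_mul, Finset.card_univ, ← Nat.card_eq_fintype_card,
          Nat.card_coe_set_eq, mul_comm]
    _ ≤ ∑ f : N, M.faceSize f := Finset.sum_le_sum fun f _ => three_le_faceSize hs hd f
    _ = (M.fce ⁻¹' N).ncard := hcard.symm

lemma ncard_preimage_add_three_mul_ncard_faceNbrs_le (hs : M.Simple) (hd : M.DualLoopFree)
    (hind : ∀ f ∈ F, ∀ g ∈ F, ¬ M.FaceAdj f g) :
    (M.fce ⁻¹' F).ncard + 3 * (M.faceNbrs F).ncard ≤ Nat.card M.D := by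
  have hdisj : Disjoint F (M.faceNbrs F) :=
    Set.disjoint_left.2 fun f hf ⟨g, hg, hgf⟩ => hind g hg f hf hgf
  calc (M.fce ⁻¹' F).ncard + 3 * (M.faceNbrs F).ncard
      ≤ (M.fce ⁻¹' F).ncard + (M.fce ⁻¹' M.faceNbrs F).ncard :=
        Nat.add_le_add_left (three_mul_ncard_le_ncard_preimage hs hd _) _
    _ = (M.fce ⁻¹' F ∪ M.fce ⁻¹' M.faceNbrs F).ncard :=
        (Set.ncard_union_eq (hdisj.preimage _)).symm
    _ ≤ Nat.card M.D := by rw [← Set.ncard_univ]; exact Set.ncard_le_ncard (Set.subset_univ _)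

lemma rho_apply_ne_of_mem (hind : ∀ f ∈ F, ∀ g ∈ F, ¬ M.FaceAdj f g) {x y : M.D}
    (hx : M.fce x ∈ F) (hy : M.fce y ∈ F) : M.ρ x ≠ y := by
  rintro rfl
  exact hind _ hx _ hy ⟨x, rfl, (fce_rho x).symm⟩

lemma rho_rho_apply_ne_of_mem (hs : M.Simple)
    (hinj : Set.InjOn (fun d => M.fce (M.σ d)) (M.fce ⁻¹' F)) {x y : M.D}
    (hx : M.fce x ∈ F) (hy : M.fce y ∈ F) : M.ρ (M.ρ x) ≠ y := by
  rintro rfl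
  have hmem : M.fce (M.σ (M.ρ x)) ∈ F := by rwa [← fce_rho]
  have hx' : M.σ (M.ρ x) = x := hinj hmem hx (by simp only [M.σ_invol, fce_rho])
  have hρ : M.ρ x = M.σ x := by simpa only [M.σ_invol] using congrArg M.σ hx'
  exact hs.1 x (by rw [← hρ, vtx_rho])

lemma rho_pow_apply_ne_of_mem (hs : M.Simple) (hind : ∀ f ∈ F, ∀ g ∈ F, ¬ M.FaceAdj f g)
    (hinj : Set.InjOn (fun d => M.fce (M.σ d)) (M.fce ⁻¹' F)) {x y : M.D}
    (hx : M.fce x ∈ F) (hy : M.fce y ∈ F) {k : ℕ} (hk₀ : 0 < k) (hk : k < 3) :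
    (M.ρ ^ k) x ≠ y := by
  interval_cases k
  · simpa using rho_apply_ne_of_mem hind hx hy
  · simpa [sq] using rho_rho_apply_ne_of_mem hs hinj hx hy

lemma eq_of_rho_pow_apply_eq (hs : M.Simple) (hind : ∀ f ∈ F, ∀ g ∈ F, ¬ M.FaceAdj f g)
    (hinj : Set.InjOn (fun d => M.fce (M.σ d)) (M.fce ⁻¹' F)) {x y : M.D}
    (hx : M.fce x ∈ F) (hy : M.fce y ∈ F) {i j : ℕ} (hi : i < 3) (hj : j < 3)
    (h : (M.ρ ^ i) x = (M.ρ ^ j) y) : x = y ∧ i = j := by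
  wlog hij : i ≤ j generalizing x y i j
  · exact (this hy hx hj hi h.symm (le_of_not_ge hij)).imp Eq.symm Eq.symm
  obtain ⟨k, rfl⟩ := Nat.exists_eq_add_of_le hij
  rw [pow_add, Equiv.Perm.mul_apply] at h
  have hxy := (M.ρ ^ i).injective h
  rcases Nat.eq_zero_or_pos k with rfl | hk₀
  · exact ⟨hxy, rfl⟩
  · exact absurd hxy.symm (rho_pow_apply_ne_of_mem hs hind hinj hy hx hk₀ (by omega))

lemma three_mul_ncard_le_degree (hs : M.Simple) (hind : ∀ f ∈ F, ∀ g ∈ F, ¬ M.FaceAdj f g)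
    (hinj : Set.InjOn (fun d => M.fce (M.σ d)) (M.fce ⁻¹' F)) (v : M.Vertex) :
    3 * (M.fce ⁻¹' F ∩ M.vtx ⁻¹' {v}).ncard ≤ M.degree v := by
  let rot : (M.fce ⁻¹' F ∩ M.vtx ⁻¹' {v} : Set M.D) × Fin 3 → {d // M.vtx d = v} :=
    fun p => ⟨(M.ρ ^ (p.2 : ℕ)) p.1, (vtx_rho_pow _ _).trans p.1.2.2⟩
  have hrot : Function.Injective rot := by
    rintro ⟨x, i⟩ ⟨y, j⟩ h
    obtain ⟨hxy, hij⟩ := eq_of_rho_pow_apply_eq hs hind hinj x.2.1 y.2.1 i.2 j.2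
      (congrArg Subtype.val h)
    rw [Subtype.ext hxy, Fin.ext hij]
  simpa [degree, Nat.card_prod, Nat.card_coe_set_eq, mul_comm] using
    Nat.card_le_card_of_injective rot hrot

lemma min_ncard_preimage_seven_le_nV (hs : M.Simple)
    (hind : ∀ f ∈ F, ∀ g ∈ F, ¬ M.FaceAdj f g)
    (hinj : Set.InjOn (fun d => M.fce (M.σ d)) (M.fce ⁻¹' F)) :
    min (M.fce ⁻¹' F).ncard 7 ≤ M.nV := by
  by_cases hvtx : Set.InjOn M.vtx (M.fce ⁻¹' F)
  · refine min_le_of_left_le ?_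
    rw [nV, ← Set.ncard_univ]
    exact Set.ncard_le_ncard_of_injOn _ (fun _ _ => Set.mem_univ _) hvtx
  · obtain ⟨x, hx, y, hy, hxy, hne⟩ : ∃ x ∈ M.fce ⁻¹' F, ∃ y ∈ M.fce ⁻¹' F,
        M.vtx x = M.vtx y ∧ x ≠ y := by
      simpa [Set.InjOn] using hvtx
    have htwo : 2 ≤ (M.fce ⁻¹' F ∩ M.vtx ⁻¹' {M.vtx x}).ncard := by
      rw [← Set.ncard_pair hne]
      refine Set.ncard_le_ncard ?_
      rintro _ (rfl | rfl)
      exacts [⟨hx, rfl⟩, ⟨hy, hxy.symm⟩]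
    have hdeg := three_mul_ncard_le_degree hs hind hinj (M.vtx x)
    have hlt := hs.degree_lt_nV (M.vtx x)
    omega

end FaceSet

end CombMap

/-- Every empty 7-pair whose spanning faces `f_e, f_e'` neighbour 7 pairwise
different faces has exactly 7 vertices and at least 14 edges. -/
theorem empty_seven_pair_vertices_edges
    (M : CombMap) (fe fe' : M.Face)
    (hpair : M.IsEmptyPair 7 fe fe')
    (hnbrs : Nat.card {f : M.Face // M.FaceAdj fe f ∨ M.FaceAdj fe' f} = 7) :
    M.nV = 7 ∧ 14 ≤ M.nE := by
  obtain ⟨hV, hne, hsize, -, hnadj, hs, hd, -⟩ := hpair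
  have hind : ∀ f ∈ ({fe, fe'} : Set M.Face), ∀ g ∈ ({fe, fe'} : Set M.Face),
      ¬ M.FaceAdj f g := by
    rintro _ (rfl | rfl) _ (rfl | rfl)
    exacts [hd.not_faceAdj_self _, hnadj, fun h => hnadj h.symm, hd.not_faceAdj_self _]
  have hdarts : (M.fce ⁻¹' {fe, fe'}).ncard = 7 := by
    rw [CombMap.ncard_preimage_pair hne, hsize]
  have hnbrs' : (M.faceNbrs {fe, fe'}).ncard = 7 := by
    rwa [CombMap.faceNbrs_pair, ← Nat.card_coe_set_eq]
  have hinj := CombMap.injOn_fce_sigma_of_ncard_faceNbrs_eq (hnbrs'.trans hdarts.symm)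
  have hvtx := CombMap.min_ncard_preimage_seven_le_nV hs hind hinj
  have hdarts_faces := CombMap.ncard_preimage_add_three_mul_ncard_faceNbrs_le hs hd hind
  have hedges := CombMap.card_D_eq_two_mul_nE (M := M)
  rw [hdarts] at hvtx hdarts_faces
  rw [hnbrs'] at hdarts_faces
  omega
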